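/- Let P be a program over Σ, let χ ∈ {κ, HT}, let Π = P^χ ∪ P_g, and let M be an answer set of Π. Then AS(Π ∪ Π_M) ≠ ∅ if and only if M is not a paracoherent answer set of P. -/

import Mathlib

/-!
The program `P^χ` is positive and contains no gap atoms, and `P_g` only derives gap atoms on
top of it. Hence the answer sets of `Π` are exactly the sets `S ∪ {gap(Ka) : Ka ∈ 𝒢(S)}` for
`S ∈ AS(P^χ)`, and `gap(M)` is a copy of `𝒢(M)`. The constraints `Π_M` keep those answer sets
`N` of `Π` with `gap(N) ⊊ gap(M)`, that is `𝒢(N) ⊊ 𝒢(M)`. So `Π ∪ Π_M` is coherent iff some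
answer set of `P^χ` has a strictly smaller gap than `M`, which is exactly the failure of
`M ∩ Σ^κ` to be the trace of a gap-minimal answer set of `P^χ`.
-/

namespace ASP

/-- A rule: head, positive body, negative body (finite sets of atoms). -/
structure Rule (α : Type) where
  head : Finset α
  pos : Finset α
  neg : Finset α
deriving DecidableEq

/-- The extended propositional signature: original atoms of `Σ = σ`, the fresh
believed atoms `K a`, the fresh atoms `λ_{r,a}` (one for each rule `r` over `σ`
and each atom `a`, used for head atoms of `r`), and the fresh atoms `gap (K a)`. -/
inductive Atom (σ : Type) where
  | base : σ → Atom σ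
  | K : σ → Atom σ
  | lam : Rule σ → σ → Atom σ
  | gap : σ → Atom σ
deriving DecidableEq

/-- An interpretation `I` satisfies rule `r`. -/
def Rule.sat {α : Type} (I : Set α) (r : Rule α) : Prop :=
  ((↑r.pos ⊆ I) ∧ ∀ b ∈ r.neg, b ∉ I) → ∃ a ∈ r.head, a ∈ I

/-- `I` is a model of the program `P`. -/
def isModel {α : Type} (I : Set α) (P : Finset (Rule α)) : Prop :=
  ∀ r ∈ P, r.sat I

/-- `I` is a minimal model of `P`. -/
def isMinModel {α : Type} (I : Set α) (P : Finset (Rule α)) : Prop :=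
  isModel I P ∧ ∀ J : Set α, J ⊂ I → ¬ isModel J P

open Classical in
/-- The Gelfond-Lifschitz reduct `P^I`. -/
noncomputable def reduct {α : Type} (P : Finset (Rule α)) (I : Set α) :
    Finset (Rule α) :=
  (P.filter (fun r => ∀ b ∈ r.neg, b ∉ I)).image (fun r => ⟨r.head, r.pos, ∅⟩)

/-- The answer sets of `P`. -/
def AS {α : Type} (P : Finset (Rule α)) : Set (Set α) :=
  {I | isMinModel I (reduct P I)}

/-- The atoms occurring in a rule. -/
def ruleAtoms {α : Type} [DecidableEq α] (r : Rule α) : Finset α :=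
  r.head ∪ r.pos ∪ r.neg

/-- `At(P)`: the atoms occurring in a program. -/
def progAtoms {α : Type} [DecidableEq α] (P : Finset (Rule α)) : Finset α :=
  P.biUnion ruleAtoms

/-- Map a rule along an atom translation. -/
def mapRule {σ α : Type} [DecidableEq α] (f : σ → α) (r : Rule σ) : Rule α :=
  ⟨r.head.image f, r.pos.image f, r.neg.image f⟩

variable {σ : Type} [DecidableEq σ]

/-- The rules of `P^κ` produced for a single rule of `P`. -/
def kappaRule (r : Rule σ) : Finset (Rule (Atom σ)) :=
  if r.neg = ∅ then {mapRule Atom.base r}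
  else
    {⟨r.head.image (Atom.lam r) ∪ r.neg.image Atom.K, r.pos.image Atom.base, ∅⟩}
    ∪ r.head.image (fun a => ⟨{Atom.base a}, {Atom.lam r a}, ∅⟩)
    ∪ (r.head ×ˢ r.neg).image
        (fun p => ⟨∅, {Atom.lam r p.1, Atom.base p.2}, ∅⟩)
    ∪ (r.head ×ˢ r.head).image
        (fun p => ⟨{Atom.lam r p.1}, {Atom.base p.1, Atom.lam r p.2}, ∅⟩)

/-- The epistemic κ-transformation `P^κ`. -/
def kappa (P : Finset (Rule σ)) : Finset (Rule (Atom σ)) :=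
  P.biUnion kappaRule

/-- The epistemic HT-transformation `P^HT`. -/
def ht (P : Finset (Rule σ)) : Finset (Rule (Atom σ)) :=
  kappa P
  ∪ (progAtoms P).image (fun a => ⟨{Atom.K a}, {Atom.base a}, ∅⟩)
  ∪ P.image (fun r => ⟨(r.head ∪ r.neg).image Atom.K, r.pos.image Atom.K, ∅⟩)

/-- The choice `χ ∈ {κ, HT}` of epistemic transformation. -/
inductive Chi | kappa | ht

/-- `P^χ` for `χ ∈ {κ, HT}`. -/
def epi (χ : Chi) (P : Finset (Rule σ)) : Finset (Rule (Atom σ)) :=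
  match χ with
  | Chi.kappa => kappa P
  | Chi.ht => ht P

/-- The gap program `P_g`: for each atom `a` occurring in `P`,
the rule `gap(Ka) ← Ka, not a`. -/
def Pg (P : Finset (Rule σ)) : Finset (Rule (Atom σ)) :=
  (progAtoms P).image (fun a => ⟨{Atom.gap a}, {Atom.K a}, {Atom.base a}⟩)

/-- `Π = P^χ ∪ P_g`. -/
def Pi' (χ : Chi) (P : Finset (Rule σ)) : Finset (Rule (Atom σ)) :=
  epi χ P ∪ Pg P

/-- The signature `Σ^κ = Σ ∪ {Ka : a ∈ Σ}` as a set of extended atoms. -/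
def SigmaK (σ : Type) : Set (Atom σ) :=
  Set.range Atom.base ∪ Set.range Atom.K

/-- The gap `𝒢(I) = {Ka : Ka ∈ I and a ∉ I}` of an interpretation. -/
def gapG (I : Set (Atom σ)) : Set (Atom σ) :=
  {x | ∃ a : σ, x = Atom.K a ∧ Atom.K a ∈ I ∧ Atom.base a ∉ I}

/-- Maximal canonical interpretations in `ℱ`. -/
def mc (F : Set (Set (Atom σ))) : Set (Set (Atom σ)) :=
  {I | I ∈ F ∧ ¬ ∃ J ∈ F, gapG J ⊂ gapG I}

/-- The semi-stable models of `P`. -/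
def SST (P : Finset (Rule σ)) : Set (Set (Atom σ)) :=
  {I | ∃ S ∈ mc (AS (kappa P)), I = S ∩ SigmaK σ}

/-- The semi-equilibrium models of `P`. -/
def SEQ (P : Finset (Rule σ)) : Set (Set (Atom σ)) :=
  {I | ∃ S ∈ mc (AS (ht P)), I = S ∩ SigmaK σ}

/-- The paracoherent semantics selected by `χ`. -/
def PSem (χ : Chi) (P : Finset (Rule σ)) : Set (Set (Atom σ)) :=
  match χ with
  | Chi.kappa => SST P
  | Chi.ht => SEQ P

/-- `M` is a paracoherent answer set of `P` (w.r.t. `χ`): `M` is an answer set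
of `Π = P^χ ∪ P_g` and `M ∩ Σ^κ ∈ SST(P)` (resp. `SEQ(P)`). -/
def paracoherent (χ : Chi) (P : Finset (Rule σ)) (M : Set (Atom σ)) : Prop :=
  M ∈ AS (Pi' χ P) ∧ M ∩ SigmaK σ ∈ PSem χ P

/-- `gap(I) = {gap(Ka) : a occurs in P and gap(Ka) ∈ I}`. -/
def gapSet (P : Finset (Rule σ)) (I : Set (Atom σ)) : Set (Atom σ) :=
  {x | ∃ a ∈ progAtoms P, x = Atom.gap a ∧ Atom.gap a ∈ I}

open Classical in
/-- `gap(I)` as a finite set (used for counting violated weak constraints). -/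
noncomputable def gapFin (P : Finset (Rule σ)) (I : Set (Atom σ)) :
    Finset (Atom σ) :=
  ((progAtoms P).image Atom.gap).filter (· ∈ I)

open Classical in
/-- The constraints `Π_M`: the constraint whose positive body is `gap(M)`,
plus, for each gap atom occurring in `Π` but not in `M`, the constraint
forbidding it. -/
noncomputable def PiM (P : Finset (Rule σ)) (M : Set (Atom σ)) :
    Finset (Rule (Atom σ)) :=
  {⟨∅, gapFin P M, ∅⟩}
  ∪ ((progAtoms P).filter (fun a => Atom.gap a ∉ M)).image
      (fun a => ⟨(∅ : Finset (Atom σ)), {Atom.gap a}, ∅⟩)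

/-- `M` is an optimum answer set of `Π ∪ W`, where `W` is the set of weak
constraints `↝ gap(Ka)` for `a ∈ At(P)`: an answer set of `Π` minimizing the
number `|gap(M)|` of violated weak constraints. -/
def optimum (χ : Chi) (P : Finset (Rule σ)) (M : Set (Atom σ)) : Prop :=
  M ∈ AS (Pi' χ P) ∧
    ∀ M' ∈ AS (Pi' χ P), (gapFin P M).card ≤ (gapFin P M').card

end ASP

namespace ASP

section Rules

variable {α : Type}

lemma mem_reduct {P : Finset (Rule α)} {I : Set α} {r' : Rule α} :
    r' ∈ reduct P I ↔
      ∃ r ∈ P, (∀ b ∈ r.neg, b ∉ I) ∧ r' = ⟨r.head, r.pos, ∅⟩ := by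
  simp only [reduct, Finset.mem_image, Finset.mem_filter, and_assoc, eq_comm]

lemma reduct_of_neg_eq_empty {P : Finset (Rule α)} {I : Set α}
    (h : ∀ r ∈ P, r.neg = ∅) : reduct P I = P := by
  ext r'
  rw [mem_reduct]
  constructor
  · rintro ⟨r, hr, -, rfl⟩
    rwa [← h r hr]
  · intro hr
    exact ⟨r', hr, by simp [h r' hr], by rw [← h r' hr]⟩

lemma isModel_reduct_self {P : Finset (Rule α)} {I : Set α} :
    isModel I (reduct P I) ↔ isModel I P := by
  constructor
  · rintro h r hr ⟨hp, hn⟩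
    exact h ⟨r.head, r.pos, ∅⟩ (mem_reduct.2 ⟨r, hr, hn, rfl⟩) ⟨hp, by simp⟩
  · intro h r' hr'
    obtain ⟨r, hr, hn, rfl⟩ := mem_reduct.1 hr'
    rintro ⟨hp, -⟩
    exact h r hr ⟨hp, hn⟩

lemma isModel_reduct_of_head_eq_empty {C : Finset (Rule α)} {I J : Set α}
    (hC : ∀ c ∈ C, c.head = ∅) (hI : isModel I C) (hJI : J ⊆ I) :
    isModel J (reduct C I) := by
  intro r' hr'
  obtain ⟨c, hc, hn, rfl⟩ := mem_reduct.1 hr'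
  rintro ⟨hp, -⟩
  obtain ⟨a, ha, -⟩ := hI c hc ⟨hp.trans hJI, hn⟩
  simp [hC c hc] at ha

variable [DecidableEq α]

lemma mem_ruleAtoms {r : Rule α} {x : α} :
    x ∈ ruleAtoms r ↔ x ∈ r.head ∨ x ∈ r.pos ∨ x ∈ r.neg := by
  simp [ruleAtoms]

lemma mem_progAtoms {P : Finset (Rule α)} {x : α} :
    x ∈ progAtoms P ↔ ∃ r ∈ P, x ∈ ruleAtoms r :=
  Finset.mem_biUnion

lemma Rule.sat_congr {r : Rule α} {I J : Set α}
    (h : ∀ x ∈ ruleAtoms r, x ∈ I ↔ x ∈ J) : r.sat I ↔ r.sat J := by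
  simp only [mem_ruleAtoms, or_imp, forall_and] at h
  obtain ⟨hh, hp, hn⟩ := h
  simp only [Rule.sat, Set.subset_def, Finset.mem_coe]
  exact imp_congr (and_congr (forall₂_congr hp) (forall₂_congr fun x hx => not_congr (hn x hx)))
    (exists_congr fun x => and_congr_right (hh x))

lemma isModel_union {P Q : Finset (Rule α)} {I : Set α} :
    isModel I (P ∪ Q) ↔ isModel I P ∧ isModel I Q := by
  simp [isModel, or_imp, forall_and]

lemma reduct_union {P Q : Finset (Rule α)} {I : Set α} :
    reduct (P ∪ Q) I = reduct P I ∪ reduct Q I := by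
  ext r
  simp only [Finset.mem_union, mem_reduct, or_and_right, exists_or]

lemma mem_AS_union_of_head_eq_empty {P C : Finset (Rule α)} (hC : ∀ c ∈ C, c.head = ∅)
    {I : Set α} : I ∈ AS (P ∪ C) ↔ I ∈ AS P ∧ isModel I C := by
  simp only [AS, isMinModel, reduct_union, isModel_union]
  constructor
  · rintro ⟨⟨hP, hC'⟩, hmin⟩
    have hIC := isModel_reduct_self.1 hC'
    exact ⟨⟨hP, fun J hJ hJP =>
      hmin J hJ ⟨hJP, isModel_reduct_of_head_eq_empty hC hIC hJ.subset⟩⟩, hIC⟩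
  · rintro ⟨⟨hP, hmin⟩, hIC⟩
    exact ⟨⟨hP, isModel_reduct_self.2 hIC⟩, fun J hJ hJP => hmin J hJ hJP.1⟩

lemma subset_progAtoms_of_mem_AS {P : Finset (Rule α)} {I : Set α} (hI : I ∈ AS P) :
    I ⊆ progAtoms P := by
  obtain ⟨hmod, hmin⟩ := hI
  by_contra hsub
  refine hmin (I ∩ progAtoms P) (Set.inter_ssubset_left_iff.2 hsub) fun r' hr' => ?_
  obtain ⟨r, hr, -, rfl⟩ := mem_reduct.1 hr'
  refine (Rule.sat_congr fun x hx => ?_).1 (hmod _ hr')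
  have : x ∈ progAtoms P := mem_progAtoms.2 ⟨r, hr, by
    simp only [mem_ruleAtoms, Finset.notMem_empty, or_false] at hx ⊢; tauto⟩
  simp [this]

end Rules

section Transformation

variable {σ : Type} [DecidableEq σ] {P : Finset (Rule σ)} {χ : Chi}

lemma neg_eq_empty_of_mem_kappaRule {r₀ : Rule σ} {r : Rule (Atom σ)}
    (h : r ∈ kappaRule r₀) : r.neg = ∅ := by
  unfold kappaRule at h
  split_ifs at h with hn
  · simp_all [mapRule]
  · simp only [Finset.mem_union, Finset.mem_singleton, Finset.mem_image] at h
    rcases h with ((rfl | ⟨_, _, rfl⟩) | ⟨_, _, rfl⟩) | ⟨_, _, rfl⟩ <;> rfl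

lemma neg_eq_empty_of_mem_epi {r : Rule (Atom σ)} (h : r ∈ epi χ P) : r.neg = ∅ := by
  cases χ <;> simp only [epi, ht, kappa, Finset.mem_union, Finset.mem_biUnion,
    Finset.mem_image] at h
  · obtain ⟨r₀, -, h⟩ := h
    exact neg_eq_empty_of_mem_kappaRule h
  · rcases h with (⟨r₀, -, h⟩ | ⟨_, _, rfl⟩) | ⟨_, _, rfl⟩
    · exact neg_eq_empty_of_mem_kappaRule h
    all_goals rfl

lemma ruleAtoms_subset_of_mem_kappaRule {r₀ : Rule σ} {r : Rule (Atom σ)}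
    (h : r ∈ kappaRule r₀) :
    (ruleAtoms r : Set (Atom σ)) ⊆ Set.range Atom.base ∪ Atom.K '' ↑(ruleAtoms r₀) ∪
      Set.range (Function.uncurry Atom.lam) := by
  unfold kappaRule at h
  split_ifs at h with hn
  · simp only [Finset.mem_singleton] at h
    subst h
    intro x hx
    simp [ruleAtoms, mapRule] at hx
    aesop
  · simp only [Finset.mem_union, Finset.mem_singleton, Finset.mem_image] at h
    rcases h with ((rfl | ⟨_, _, rfl⟩) | ⟨_, _, rfl⟩) | ⟨_, _, rfl⟩ <;> intro x hx <;>
      simp [ruleAtoms] at hx ⊢ <;> aesop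

lemma coe_progAtoms_epi_subset :
    (progAtoms (epi χ P) : Set (Atom σ)) ⊆ Set.range Atom.base ∪ Atom.K '' ↑(progAtoms P) ∪
      Set.range (Function.uncurry Atom.lam) := by
  have hkappa : ∀ r₀ ∈ P, ∀ r ∈ kappaRule r₀, (ruleAtoms r : Set (Atom σ)) ⊆
      Set.range Atom.base ∪ Atom.K '' ↑(progAtoms P) ∪
        Set.range (Function.uncurry Atom.lam) :=
    fun r₀ hr₀ r hr => (ruleAtoms_subset_of_mem_kappaRule hr).trans <| by
      gcongr
      exact_mod_cast Finset.subset_biUnion_of_mem ruleAtoms hr₀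
  intro x hx
  obtain ⟨r, hr, hxr⟩ := mem_progAtoms.1 hx
  cases χ <;> simp only [epi, ht, kappa, Finset.mem_union, Finset.mem_biUnion,
    Finset.mem_image] at hr
  · obtain ⟨r₀, hr₀, hr⟩ := hr
    exact hkappa r₀ hr₀ r hr hxr
  · rcases hr with (⟨r₀, hr₀, hr⟩ | ⟨a, ha, rfl⟩) | ⟨r₀, hr₀, rfl⟩
    · exact hkappa r₀ hr₀ r hr hxr
    · simp only [ruleAtoms, Finset.mem_union, Finset.mem_singleton, Finset.notMem_empty,
        or_false] at hxr
      rcases hxr with rfl | rfl <;> simp [ha]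
    · have : ruleAtoms r₀ ⊆ progAtoms P := Finset.subset_biUnion_of_mem ruleAtoms hr₀
      simp only [ruleAtoms, Finset.mem_union, Finset.mem_image, Finset.notMem_empty,
        or_false] at hxr
      rcases hxr with ⟨b, hb, rfl⟩ | ⟨b, hb, rfl⟩ <;>
        exact .inl (.inr ⟨b, this (by simp [ruleAtoms] at hb ⊢; tauto), rfl⟩)

lemma gap_notMem_progAtoms_epi (a : σ) : Atom.gap a ∉ progAtoms (epi χ P) := fun h => by
  simpa using coe_progAtoms_epi_subset h

lemma mem_progAtoms_of_K_mem_progAtoms_epi {a : σ} (h : Atom.K a ∈ progAtoms (epi χ P)) :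
    a ∈ progAtoms P := by
  simpa using coe_progAtoms_epi_subset h

end Transformation

section Gap

variable {σ : Type}

lemma K_mem_gapG {I : Set (Atom σ)} {a : σ} :
    Atom.K a ∈ gapG I ↔ Atom.K a ∈ I ∧ Atom.base a ∉ I := by
  simp [gapG]

lemma gapG_subset_range_K (I : Set (Atom σ)) : gapG I ⊆ Set.range Atom.K := by
  rintro _ ⟨a, rfl, -⟩
  exact ⟨a, rfl⟩

lemma gapG_congr {I J : Set (Atom σ)} (h : I ∩ SigmaK σ = J ∩ SigmaK σ) :
    gapG I = gapG J := by
  have hb : ∀ a, Atom.base a ∈ I ↔ Atom.base a ∈ J := fun a => by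
    simpa [SigmaK] using congrArg (Atom.base a ∈ ·) h
  have hK : ∀ a, Atom.K a ∈ I ↔ Atom.K a ∈ J := fun a => by
    simpa [SigmaK] using congrArg (Atom.K a ∈ ·) h
  ext x
  simp only [gapG, Set.mem_ofPred_eq, hb, hK]

lemma disjoint_range_gap_SigmaK : Disjoint (Set.range (Atom.gap (σ := σ))) (SigmaK σ) := by
  rw [Set.disjoint_left]
  rintro _ ⟨a, rfl⟩
  simp [SigmaK]

lemma sdiff_range_gap_inter_SigmaK (M : Set (Atom σ)) :
    (M \ Set.range Atom.gap) ∩ SigmaK σ = M ∩ SigmaK σ := by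
  ext x
  have : x ∈ SigmaK σ → x ∉ Set.range Atom.gap := fun hx =>
    Set.disjoint_right.1 disjoint_range_gap_SigmaK hx
  simp only [Set.mem_inter_iff, Set.mem_sdiff]
  tauto

lemma gapG_sdiff_range_gap (M : Set (Atom σ)) : gapG (M \ Set.range Atom.gap) = gapG M :=
  gapG_congr (sdiff_range_gap_inter_SigmaK M)

lemma union_inter_SigmaK_of_subset_range_gap {S X : Set (Atom σ)}
    (hX : X ⊆ Set.range Atom.gap) : (S ∪ X) ∩ SigmaK σ = S ∩ SigmaK σ := by
  rw [Set.union_inter_distrib_right,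
    (disjoint_range_gap_SigmaK.mono_left hX).inter_eq, Set.union_empty]

def withGaps (S : Set (Atom σ)) : Set (Atom σ) :=
  S ∪ Atom.gap '' (Atom.K ⁻¹' gapG S)

lemma gapG_withGaps (S : Set (Atom σ)) : gapG (withGaps S) = gapG S :=
  gapG_congr (union_inter_SigmaK_of_subset_range_gap (Set.image_subset_range _ _))

end Gap

section SplitGaps

variable {σ : Type} [DecidableEq σ] {P : Finset (Rule σ)} {χ : Chi}

lemma isModel_epi_sdiff_range_gap {J : Set (Atom σ)} :
    isModel (J \ Set.range Atom.gap) (epi χ P) ↔ isModel J (epi χ P) :=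
  forall₂_congr fun r hr => Rule.sat_congr fun x hx => by
    have : x ∉ Set.range Atom.gap := by
      rintro ⟨a, rfl⟩
      exact gap_notMem_progAtoms_epi a (mem_progAtoms.2 ⟨r, hr, hx⟩)
    simp [this]

lemma mem_AS_epi_iff {S : Set (Atom σ)} : S ∈ AS (epi χ P) ↔ isMinModel S (epi χ P) := by
  rw [AS, Set.mem_ofPred_eq, reduct_of_neg_eq_empty fun r => neg_eq_empty_of_mem_epi]

lemma isModel_reduct_Pi'_iff {I J : Set (Atom σ)} :
    isModel J (reduct (Pi' χ P) I) ↔ isModel (J \ Set.range Atom.gap) (epi χ P) ∧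
      ∀ a ∈ progAtoms P, Atom.base a ∉ I → Atom.K a ∈ J → Atom.gap a ∈ J := by
  rw [Pi', reduct_union, reduct_of_neg_eq_empty fun r => neg_eq_empty_of_mem_epi,
    isModel_union, isModel_epi_sdiff_range_gap]
  refine and_congr_right' ⟨fun h a ha hb hK => ?_, fun h r' hr' => ?_⟩
  · have hr : (⟨{Atom.gap a}, {Atom.K a}, ∅⟩ : Rule (Atom σ)) ∈ reduct (Pg P) I :=
      mem_reduct.2 ⟨_, Finset.mem_image_of_mem _ ha, by simpa using hb, rfl⟩
    simpa using h _ hr ⟨by simpa using hK, by simp⟩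
  · obtain ⟨r, hr, hn, rfl⟩ := mem_reduct.1 hr'
    obtain ⟨a, ha, rfl⟩ := Finset.mem_image.1 hr
    rintro ⟨hK, -⟩
    simpa using h a ha (by simpa using hn) (by simpa using hK)

lemma gap_notMem_of_mem_AS_epi {S : Set (Atom σ)} (hS : S ∈ AS (epi χ P)) (a : σ) :
    Atom.gap a ∉ S := fun h =>
  gap_notMem_progAtoms_epi a (subset_progAtoms_of_mem_AS hS h)

lemma mem_progAtoms_of_K_mem_AS_epi {S : Set (Atom σ)} (hS : S ∈ AS (epi χ P)) {a : σ}
    (h : Atom.K a ∈ S) : a ∈ progAtoms P :=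
  mem_progAtoms_of_K_mem_progAtoms_epi (subset_progAtoms_of_mem_AS hS h)

lemma sdiff_range_gap_mem_AS {M : Set (Atom σ)} (hM : M ∈ AS (Pi' χ P)) :
    M \ Set.range Atom.gap ∈ AS (epi χ P) := by
  obtain ⟨hmod, hmin⟩ := hM
  rw [isModel_reduct_Pi'_iff] at hmod
  refine mem_AS_epi_iff.2 ⟨hmod.1, fun J hJ hJmod => ?_⟩
  have hJM : ∀ x ∈ J, x ∈ M ∧ x ∉ Set.range Atom.gap := fun x hx => hJ.subset hx
  have hJ' : (J ∪ M ∩ Set.range Atom.gap) \ Set.range Atom.gap = J := by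
    ext x
    have := hJM x
    simp only [Set.mem_sdiff, Set.mem_union, Set.mem_inter_iff]
    tauto
  -- a smaller model of `P^χ`, padded with the gap atoms of `M`, is a smaller model of `Π^M`
  refine hmin (J ∪ M ∩ Set.range Atom.gap)
    (Set.ssubset_iff_subset_ne.2 ⟨?_, fun h => hJ.ne (by rw [← h, hJ'])⟩)
    (isModel_reduct_Pi'_iff.2 ⟨by rwa [hJ'], fun a ha hb hK => .inr ⟨?_, a, rfl⟩⟩)
  · exact Set.union_subset (fun x hx => (hJM x hx).1) Set.inter_subset_left
  · exact hmod.2 a ha hb (hK.elim (fun h => (hJM _ h).1) And.left)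

lemma mem_progAtoms_of_K_mem_AS {M : Set (Atom σ)} (hM : M ∈ AS (Pi' χ P)) {a : σ}
    (h : Atom.K a ∈ M) : a ∈ progAtoms P :=
  mem_progAtoms_of_K_mem_AS_epi (sdiff_range_gap_mem_AS hM) ⟨h, by simp⟩

lemma gap_mem_iff_K_mem_gapG {M : Set (Atom σ)} (hM : M ∈ AS (Pi' χ P)) {a : σ} :
    Atom.gap a ∈ M ↔ Atom.K a ∈ gapG M := by
  obtain ⟨hmod, hmin⟩ := id hM
  rw [isModel_reduct_Pi'_iff] at hmod
  rw [K_mem_gapG]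
  refine ⟨fun hg => ?_, fun ⟨hK, hb⟩ => hmod.2 a (mem_progAtoms_of_K_mem_AS hM hK) hb hK⟩
  by_contra hA
  refine hmin (M \ {Atom.gap a}) (Set.sdiff_singleton_ssubset.2 hg)
    (isModel_reduct_Pi'_iff.2
      ⟨?_, fun b hb hbM hKb => ⟨hmod.2 b hb hbM hKb.1, fun h => ?_⟩⟩)
  · rw [Set.sdiff_sdiff, Set.union_eq_right.2 (by simp)]
    exact hmod.1
  · obtain rfl : b = a := by simpa using h
    exact hA ⟨hKb.1, hbM⟩

lemma withGaps_mem_AS {S : Set (Atom σ)} (hS : S ∈ AS (epi χ P)) :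
    withGaps S ∈ AS (Pi' χ P) := by
  have hSG : withGaps S \ Set.range Atom.gap = S := by
    rw [withGaps, Set.union_sdiff_distrib, Set.sdiff_eq_empty.2 (Set.image_subset_range _ _),
      Set.union_empty, sdiff_eq_left, Set.disjoint_right]
    rintro _ ⟨a, rfl⟩
    exact gap_notMem_of_mem_AS_epi hS a
  obtain ⟨hmod, hmin⟩ := mem_AS_epi_iff.1 hS
  refine ⟨isModel_reduct_Pi'_iff.2 ⟨by rwa [hSG], fun a _ hb hK => ?_⟩,
    fun J hJ hJmod => ?_⟩
  · refine .inr ⟨a, ?_, rfl⟩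
    rw [Set.mem_preimage, ← gapG_withGaps]
    exact K_mem_gapG.2 ⟨hK, hb⟩
  rw [isModel_reduct_Pi'_iff] at hJmod
  have hJS : J \ Set.range Atom.gap = S := by
    by_contra hne
    have hsub : J \ Set.range Atom.gap ⊆ S := hSG ▸ Set.sdiff_subset_sdiff_left hJ.subset
    exact hmin _ (Set.ssubset_iff_subset_ne.2 ⟨hsub, hne⟩) hJmod.1
  have hSJ : S ⊆ J := hJS ▸ Set.sdiff_subset
  refine hJ.not_subset (Set.union_subset hSJ ?_)
  rintro _ ⟨a, ha, rfl⟩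
  rw [Set.mem_preimage, K_mem_gapG] at ha
  exact hJmod.2 a (mem_progAtoms_of_K_mem_AS_epi hS ha.1)
    (fun h => ha.2 (hSG ▸ ⟨h, by simp⟩)) (hSJ ha.1)

end SplitGaps

section Constraints

variable {σ : Type} [DecidableEq σ] {P : Finset (Rule σ)}

lemma mem_gapFin {I : Set (Atom σ)} {x : Atom σ} :
    x ∈ gapFin P I ↔ ∃ a ∈ progAtoms P, x = Atom.gap a ∧ Atom.gap a ∈ I := by
  simp only [gapFin, Finset.mem_filter, Finset.mem_image]
  constructor
  · rintro ⟨⟨a, ha, rfl⟩, hx⟩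
    exact ⟨a, ha, rfl, hx⟩
  · rintro ⟨a, ha, rfl, hx⟩
    exact ⟨⟨a, ha, rfl⟩, hx⟩

lemma gapFin_subset_gapFin_iff {I J : Set (Atom σ)} :
    gapFin P I ⊆ gapFin P J ↔ ∀ a ∈ progAtoms P, Atom.gap a ∈ I → Atom.gap a ∈ J := by
  simp only [Finset.subset_iff, mem_gapFin]
  constructor
  · intro h a ha hI
    obtain ⟨b, -, hab, hJ⟩ := h ⟨a, ha, rfl, hI⟩
    rwa [hab]
  · rintro h _ ⟨a, ha, rfl, hI⟩
    exact ⟨a, ha, rfl, h a ha hI⟩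

lemma coe_gapFin_subset_iff {I J : Set (Atom σ)} :
    ↑(gapFin P I) ⊆ J ↔ ∀ a ∈ progAtoms P, Atom.gap a ∈ I → Atom.gap a ∈ J := by
  simp only [Set.subset_def, Finset.mem_coe, mem_gapFin]
  constructor
  · exact fun h a ha hI => h _ ⟨a, ha, rfl, hI⟩
  · rintro h _ ⟨a, ha, rfl, hI⟩
    exact h a ha hI

lemma head_eq_empty_of_mem_PiM {M : Set (Atom σ)} {c : Rule (Atom σ)} (hc : c ∈ PiM P M) :
    c.head = ∅ := by
  simp only [PiM, Finset.mem_union, Finset.mem_singleton, Finset.mem_image] at hc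
  rcases hc with rfl | ⟨_, _, rfl⟩ <;> rfl

lemma isModel_PiM_iff {M N : Set (Atom σ)} :
    isModel N (PiM P M) ↔ gapFin P N ⊂ gapFin P M := by
  rw [ssubset_iff_subset_not_subset, gapFin_subset_gapFin_iff, gapFin_subset_gapFin_iff,
    ← coe_gapFin_subset_iff (I := M) (J := N), PiM, isModel_union, and_comm]
  simp only [isModel, Finset.forall_mem_image, Finset.mem_singleton, forall_eq]
  simp [Rule.sat, not_imp_not]

end Constraints

section Paracoherent

variable {σ : Type} [DecidableEq σ] {P : Finset (Rule σ)} {χ : Chi}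

lemma coe_gapFin_of_mem_AS {M : Set (Atom σ)} (hM : M ∈ AS (Pi' χ P)) :
    (gapFin P M : Set (Atom σ)) = Atom.gap '' (Atom.K ⁻¹' gapG M) := by
  ext x
  simp only [Finset.mem_coe, mem_gapFin, Set.mem_image, Set.mem_preimage]
  constructor
  · rintro ⟨a, -, rfl, h⟩
    exact ⟨a, (gap_mem_iff_K_mem_gapG hM).1 h, rfl⟩
  · rintro ⟨a, h, rfl⟩
    exact ⟨a, mem_progAtoms_of_K_mem_AS hM (K_mem_gapG.1 h).1, rfl,
      (gap_mem_iff_K_mem_gapG hM).2 h⟩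

lemma gapFin_ssubset_gapFin_iff {M N : Set (Atom σ)} (hM : M ∈ AS (Pi' χ P))
    (hN : N ∈ AS (Pi' χ P)) : gapFin P N ⊂ gapFin P M ↔ gapG N ⊂ gapG M := by
  have hgap : Function.Injective (Atom.gap (σ := σ)) := fun _ _ => Atom.gap.inj
  have hK : Function.Injective (Atom.K (σ := σ)) := fun _ _ => Atom.K.inj
  rw [← Finset.coe_ssubset, coe_gapFin_of_mem_AS hM, coe_gapFin_of_mem_AS hN,
    hgap.injOn.image_ssubset_image_iff (Set.subset_univ _) (Set.subset_univ _),
    ← hK.injOn.image_ssubset_image_iff (Set.subset_univ _) (Set.subset_univ _),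
    Set.image_preimage_eq_of_subset (gapG_subset_range_K N),
    Set.image_preimage_eq_of_subset (gapG_subset_range_K M)]

lemma mem_AS_union_PiM_iff {M N : Set (Atom σ)} (hM : M ∈ AS (Pi' χ P)) :
    N ∈ AS (Pi' χ P ∪ PiM P M) ↔ N ∈ AS (Pi' χ P) ∧ gapG N ⊂ gapG M := by
  rw [mem_AS_union_of_head_eq_empty fun _ => head_eq_empty_of_mem_PiM, isModel_PiM_iff]
  exact and_congr_right fun hN => gapFin_ssubset_gapFin_iff hM hN

lemma exists_mem_AS_Pi'_gapG_ssubset_iff {G : Set (Atom σ)} :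
    (∃ N ∈ AS (Pi' χ P), gapG N ⊂ G) ↔ ∃ S ∈ AS (epi χ P), gapG S ⊂ G := by
  constructor
  · rintro ⟨N, hN, hNG⟩
    exact ⟨_, sdiff_range_gap_mem_AS hN, by rwa [gapG_sdiff_range_gap]⟩
  · rintro ⟨S, hS, hSG⟩
    exact ⟨_, withGaps_mem_AS hS, by rwa [gapG_withGaps]⟩

lemma paracoherent_iff {M : Set (Atom σ)} (hM : M ∈ AS (Pi' χ P)) :
    paracoherent χ P M ↔ ¬ ∃ S ∈ AS (epi χ P), gapG S ⊂ gapG M := by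
  have hPSem : M ∩ SigmaK σ ∈ PSem χ P ↔
      ∃ S ∈ mc (AS (epi χ P)), M ∩ SigmaK σ = S ∩ SigmaK σ := by
    cases χ <;> rfl
  rw [paracoherent, hPSem, and_iff_right hM]
  constructor
  · rintro ⟨S, ⟨-, hmin⟩, hMS⟩
    rwa [gapG_congr hMS]
  · intro hmin
    exact ⟨_, ⟨sdiff_range_gap_mem_AS hM, by rwa [gapG_sdiff_range_gap]⟩,
      (sdiff_range_gap_inter_SigmaK M).symm⟩

end Paracoherent

end ASP

open ASP in
theorem stmt1_general {σ : Type} [DecidableEq σ]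
    (P : Finset (Rule σ)) (χ : Chi) (M : Set (Atom σ))
    (hM : M ∈ AS (Pi' χ P)) :
    AS (Pi' χ P ∪ PiM P M) ≠ ∅ ↔ ¬ paracoherent χ P M := by
  rw [← Set.nonempty_iff_ne_empty, paracoherent_iff hM, not_not,
    ← exists_mem_AS_Pi'_gapG_ssubset_iff]
  simp only [Set.Nonempty, mem_AS_union_PiM_iff hM]

open ASP in
/-- For an answer set `M` of `Π = P^χ ∪ P_g`,
`AS(Π ∪ Π_M) ≠ ∅` iff `M` is not a paracoherent answer set of `P`. -/
theorem stmt1 {σ : Type} [DecidableEq σ] [Countable σ] [Infinite σ]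
    (P : Finset (Rule σ)) (χ : Chi) (M : Set (Atom σ))
    (hM : M ∈ AS (Pi' χ P)) :
    AS (Pi' χ P ∪ PiM P M) ≠ ∅ ↔ ¬ paracoherent χ P M :=
  stmt1_general P χ M hM
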